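/- There exists a non-uniform consistent random ordering on the class of all finite connected bipartite simple graphs: a consistent random ordering (μ_G)_G on this class such that for some finite connected bipartite graph G, μ_G is not the uniform probability measure on linear orderings of V(G). -/

import Mathlib

open Finset

/-- The linear orderings of a finite set `V ⊆ ℕ`, represented as the lists
enumerating the elements of `V` exactly once. -/
def Orderings (V : Finset ℕ) : Finset (List ℕ) :=
  (V.sort (· ≤ ·)).permutations.toFinset

/-- An `r`-uniform hypergraph on a finite vertex set `V ⊆ ℕ`: a set of
`r`-element subsets of `V`.  For `r = 2` this is exactly a finite simple graph. -/
structure FinHypergraph (r : ℕ) where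
  verts : Finset ℕ
  edges : Finset (Finset ℕ)
  card_edge : ∀ e ∈ edges, e.card = r
  edge_subset : ∀ e ∈ edges, e ⊆ verts

namespace FinHypergraph

/-- `H` is an induced subhypergraph of `G`. -/
def IsInduced {r : ℕ} (H G : FinHypergraph r) : Prop :=
  H.verts ⊆ G.verts ∧ ∀ e : Finset ℕ, e ⊆ H.verts → (e ∈ H.edges ↔ e ∈ G.edges)

/-- `φ` is an isomorphism from `G` onto `G'`. -/
def IsIso {r : ℕ} (G G' : FinHypergraph r) (φ : ℕ → ℕ) : Prop :=
  Set.InjOn φ G.verts ∧ G.verts.image φ = G'.verts ∧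
    ∀ e : Finset ℕ, e ⊆ G.verts → (e ∈ G.edges ↔ e.image φ ∈ G'.edges)

end FinHypergraph

/-- A consistent random ordering on a class `𝒞` of `r`-uniform hypergraphs:
an isomorphism-invariant assignment, to each hypergraph `G` in the class, of a
probability measure `μ G` on the linear orderings of its vertex set, compatible
with restriction to induced subhypergraphs. -/
structure ConsistentRandomOrdering {r : ℕ} (𝒞 : Set (FinHypergraph r)) where
  μ : FinHypergraph r → List ℕ → ℝ
  nonneg : ∀ G l, 0 ≤ μ G l
  supported : ∀ G ∈ 𝒞, ∀ l : List ℕ, l ∉ Orderings G.verts → μ G l = 0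
  total : ∀ G ∈ 𝒞, ∑ l ∈ Orderings G.verts, μ G l = 1
  iso_invariant : ∀ G ∈ 𝒞, ∀ G' ∈ 𝒞, ∀ φ : ℕ → ℕ, G.IsIso G' φ →
    ∀ l ∈ Orderings G.verts, μ G' (l.map φ) = μ G l
  restriction : ∀ G ∈ 𝒞, ∀ H ∈ 𝒞, H.IsInduced G → ∀ m ∈ Orderings H.verts,
    μ H m = ∑ l ∈ (Orderings G.verts).filter
      (fun l => l.filter (fun x => decide (x ∈ H.verts)) = m), μ G l

/-- Adjacency in a graph (`2`-uniform hypergraph). -/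
def FinHypergraph.Adj (G : FinHypergraph 2) (x y : ℕ) : Prop :=
  ({x, y} : Finset ℕ) ∈ G.edges

/-- `G` is connected: every pair of distinct vertices is joined by a path. -/
def FinHypergraph.Connected (G : FinHypergraph 2) : Prop :=
  ∀ x ∈ G.verts, ∀ y ∈ G.verts, x ≠ y →
    ∃ p : List ℕ, List.Chain G.Adj x p ∧ (x :: p).getLast (List.cons_ne_nil x p) = y

/-- `G` is bipartite: its vertex set splits into two parts such that every edge
joins the two parts. -/
def FinHypergraph.Bipartite (G : FinHypergraph 2) : Prop :=
  ∃ A B : Finset ℕ, A ∪ B = G.verts ∧ Disjoint A B ∧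
    ∀ e ∈ G.edges, ∃ a ∈ A, ∃ b ∈ B, e = ({a, b} : Finset ℕ)

/-!
A connected bipartite graph has exactly one bipartition `{A, B}`. Toss a fair coin to decide
which side comes first, and order each side uniformly at random. An isomorphism carries the
bipartition along, and a connected induced subgraph `H` has the bipartition
`{A ∩ V(H), B ∩ V(H)}`; since a uniform ordering of a set restricts to a uniform ordering of any
subset, "`A` first, then `B`" restricts to "`A ∩ V(H)` first, then `B ∩ V(H)`". On the path
`0 - 1 - 2` the ordering `0, 1, 2` puts the middle vertex between the two others, so it gets
probability `0` instead of `1 / 3!`.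
-/

namespace List
variable {α : Type*} {p : α → Bool} {x : α}

theorem filter_insertIdx_of_not (hx : p x = false) :
    ∀ (i : ℕ) (l : List α), (l.insertIdx i x).filter p = l.filter p
  | 0, l => by simp [hx]
  | _ + 1, [] => rfl
  | i + 1, a :: l => by simp [filter_cons, filter_insertIdx_of_not hx i l]

theorem IsChain.iff_getLast {R : α → α → Prop} {P : α → Prop}
    (hP : ∀ x y, R x y → (P x ↔ P y)) :
    ∀ {x : α} {l : List α}, IsChain R (x :: l) →
      (P x ↔ P ((x :: l).getLast (cons_ne_nil x l)))
  | _, [], _ => Iff.rfl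
  | x, y :: l, h => by
    rw [isChain_cons_cons] at h
    rw [getLast_cons (cons_ne_nil y l)]
    exact (hP x y h.1).trans (iff_getLast hP h.2)

variable [BEq α] [LawfulBEq α]

theorem filter_erase_of_not (hx : p x = false) (l : List α) :
    (l.erase x).filter p = l.filter p := by
  induction l with
  | nil => rfl
  | cons a l ih => by_cases h : a = x <;> simp_all [filter_cons]

theorem insertIdx_idxOf_erase : ∀ {l : List α}, x ∈ l → (l.erase x).insertIdx (l.idxOf x) x = l
  | a :: l, hx => by
    by_cases h : a = x
    · simp [h]
    · have : x ∈ l := by simpa [Ne.symm h] using hx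
      simp [h, insertIdx_idxOf_erase this]

theorem idxOf_insertIdx_self : ∀ {i : ℕ} {l : List α}, x ∉ l → i ≤ l.length →
    (l.insertIdx i x).idxOf x = i
  | 0, _, _, _ => by simp
  | i + 1, a :: l, hx, hi => by
    simp only [mem_cons, not_or, length_cons, Nat.add_le_add_iff_right] at hx hi
    simp [Ne.symm hx.1, idxOf_insertIdx_self hx.2 hi]

theorem erase_insertIdx_self : ∀ {i : ℕ} {l : List α}, x ∉ l → i ≤ l.length →
    (l.insertIdx i x).erase x = l
  | 0, _, _, _ => by simp
  | i + 1, a :: l, hx, hi => by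
    simp only [mem_cons, not_or, length_cons, Nat.add_le_add_iff_right] at hx hi
    simp [Ne.symm hx.1, erase_insertIdx_self hx.2 hi]

end List

open scoped Nat

section Orderings

variable {V : Finset ℕ} {l : List ℕ}

theorem mem_orderings : l ∈ Orderings V ↔ l.Nodup ∧ l.toFinset = V := by
  rw [Orderings, List.mem_toFinset, List.mem_permutations]
  constructor
  · intro h
    exact ⟨h.nodup_iff.2 (V.sort_nodup _), by rw [List.toFinset_eq_of_perm _ _ h, V.sort_toFinset]⟩
  · rintro ⟨hl, rfl⟩
    exact (List.perm_ext_iff_of_nodup hl (Finset.sort_nodup _ _)).2 (by simp)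

theorem length_of_mem_orderings (h : l ∈ Orderings V) : l.length = #V := by
  obtain ⟨hl, rfl⟩ := mem_orderings.1 h
  exact (List.toFinset_card_of_nodup hl).symm

theorem card_orderings (V : Finset ℕ) : #(Orderings V) = (#V)! := by
  rw [Orderings, List.toFinset_card_of_nodup (List.nodup_permutations _ (V.sort_nodup _)),
    List.length_permutations, Finset.length_sort]

theorem erase_mem_orderings_erase (h : l ∈ Orderings V) (x : ℕ) :
    l.erase x ∈ Orderings (V.erase x) := by
  obtain ⟨hl, rfl⟩ := mem_orderings.1 h
  refine mem_orderings.2 ⟨hl.erase x, ?_⟩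
  ext y
  simp [hl.mem_erase_iff]

theorem insertIdx_mem_orderings_insert {x : ℕ} (h : l ∈ Orderings V) (hx : x ∉ V) {i : ℕ}
    (hi : i ≤ l.length) : l.insertIdx i x ∈ Orderings (insert x V) := by
  obtain ⟨hl, rfl⟩ := mem_orderings.1 h
  have hperm := List.perm_insertIdx x l hi
  refine mem_orderings.2 ⟨hperm.nodup_iff.2 (hl.cons (by simpa using hx)), ?_⟩
  rw [List.toFinset_eq_of_perm _ _ hperm, List.toFinset_cons]

theorem filter_mem_orderings_filter (p : ℕ → Bool) (h : l ∈ Orderings V) :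
    l.filter p ∈ Orderings (V.filter (p ·)) := by
  obtain ⟨hl, rfl⟩ := mem_orderings.1 h
  exact mem_orderings.2 ⟨hl.filter p, List.toFinset_filter l p⟩

theorem map_mem_orderings_image {f : ℕ → ℕ} (hf : Set.InjOn f V) (h : l ∈ Orderings V) :
    l.map f ∈ Orderings (V.image f) := by
  obtain ⟨hl, rfl⟩ := mem_orderings.1 h
  refine mem_orderings.2 ⟨hl.map_on fun x hx y hy => hf (by simpa) (by simpa), ?_⟩
  ext y
  simp

theorem mem_orderings_of_map_mem_orderings_image {U : Finset ℕ} {f : ℕ → ℕ}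
    (hf : Set.InjOn f U) (hV : V ⊆ U) (hl : ∀ x ∈ l, x ∈ U)
    (h : l.map f ∈ Orderings (V.image f)) : l ∈ Orderings V := by
  obtain ⟨hnodup, himage⟩ := mem_orderings.1 h
  refine mem_orderings.2 ⟨hnodup.of_map f, ?_⟩
  have hsub : (l.toFinset : Set ℕ) ⊆ U := fun x hx => hl x (by simpa using hx)
  have : (l.toFinset : Set ℕ) = V := by
    refine (hf.image_eq_image_iff hsub (by exact_mod_cast hV)).1 ?_
    rw [← Finset.coe_image, ← Finset.coe_image, ← himage]
    ext; simp
  exact_mod_cast this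

end Orderings

section Counting

variable {S : Finset ℕ} {p : ℕ → Bool}

theorem card_filter_orderings_eq_mul_card_erase {x : ℕ} (hx : x ∈ S) (hpx : p x = false)
    (t : List ℕ) :
    #{l ∈ Orderings S | l.filter p = t} =
      #S * #{l ∈ Orderings (S.erase x) | l.filter p = t} := by
  have hlen {l : List ℕ} {i : ℕ} (hl : l ∈ Orderings (S.erase x)) (hi : i < #S) :
      i ≤ l.length := by
    rw [length_of_mem_orderings hl, Finset.card_erase_of_mem hx]; omega
  rw [← Finset.card_range #S, ← Finset.card_product]
  refine Finset.card_bij' (fun l _ => (l.idxOf x, l.erase x))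
    (fun q _ => q.2.insertIdx q.1 x) ?_ ?_ ?_ ?_
  · intro l hl
    obtain ⟨hlS, rfl⟩ := Finset.mem_filter.1 hl
    have hxl : x ∈ l := List.mem_toFinset.1 ((mem_orderings.1 hlS).2 ▸ hx)
    simp only [Finset.mem_product, Finset.mem_range, Finset.mem_filter]
    refine ⟨?_, erase_mem_orderings_erase hlS x, List.filter_erase_of_not hpx l⟩
    rw [← length_of_mem_orderings hlS]
    exact List.idxOf_lt_length_of_mem hxl
  · rintro ⟨i, l⟩ hq
    simp only [Finset.mem_product, Finset.mem_range, Finset.mem_filter] at hq ⊢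
    obtain ⟨hi, hlS, rfl⟩ := hq
    refine ⟨?_, List.filter_insertIdx_of_not hpx i l⟩
    simpa [Finset.insert_erase hx] using
      insertIdx_mem_orderings_insert hlS (Finset.notMem_erase x S) (hlen hlS hi)
  · intro l hl
    exact List.insertIdx_idxOf_erase
      (List.mem_toFinset.1 ((mem_orderings.1 (Finset.mem_filter.1 hl).1).2 ▸ hx))
  · rintro ⟨i, l⟩ hq
    simp only [Finset.mem_product, Finset.mem_range, Finset.mem_filter] at hq
    obtain ⟨hi, hlS, -⟩ := hq
    have hxl : x ∉ l := fun h =>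
      Finset.notMem_erase x S ((mem_orderings.1 hlS).2 ▸ List.mem_toFinset.2 h)
    rw [List.idxOf_insertIdx_self hxl (hlen hlS hi), List.erase_insertIdx_self hxl (hlen hlS hi)]

/-- Consistency of the uniform random ordering. -/
theorem card_filter_orderings_mul_factorial {t : List ℕ}
    (ht : t ∈ Orderings (S.filter (p ·))) :
    #{l ∈ Orderings S | l.filter p = t} * (#(S.filter (p ·)))! = (#S)! := by
  induction S using Finset.strongInduction with
  | H S ih =>
    by_cases hS : ∃ x ∈ S, p x = false
    · obtain ⟨x, hx, hpx⟩ := hS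
      have hfilter : (S.erase x).filter (p ·) = S.filter (p ·) := by
        rw [Finset.filter_erase, Finset.erase_eq_of_notMem (by simp [hpx])]
      rw [card_filter_orderings_eq_mul_card_erase hx hpx, mul_assoc,
        ← hfilter, ih _ (Finset.erase_ssubset hx) (hfilter ▸ ht), Finset.card_erase_of_mem hx,
        Nat.mul_factorial_pred (Finset.card_ne_zero_of_mem hx)]
    · push Not at hS
      have hall : ∀ x ∈ S, p x = true := fun x hx => by simpa using hS x hx
      have hid : ∀ l ∈ Orderings S, l.filter p = l := fun l hl => List.filter_eq_self.2
        fun x hx => hall x ((mem_orderings.1 hl).2 ▸ List.mem_toFinset.2 hx)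
      rw [Finset.filter_true_of_mem hall] at ht ⊢
      rw [Finset.filter_congr fun l hl => by rw [hid l hl], Finset.filter_eq', if_pos ht,
        Finset.card_singleton, one_mul]

end Counting

section BlockOrderings

def blockOrderings (A B : Finset ℕ) : Finset (List ℕ) :=
  (Orderings A ×ˢ Orderings B).image fun q => q.1 ++ q.2

variable {A B : Finset ℕ} {l : List ℕ}

theorem append_injOn_orderings :
    Set.InjOn (fun q : List ℕ × List ℕ => q.1 ++ q.2) ↑(Orderings A ×ˢ Orderings B) := by
  rintro ⟨a, b⟩ hq ⟨a', b'⟩ hq' h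
  simp only [Finset.coe_product, Set.mem_prod, Finset.mem_coe] at hq hq'
  obtain ⟨rfl, rfl⟩ := List.append_inj h
    (by rw [length_of_mem_orderings hq.1, length_of_mem_orderings hq'.1])
  rfl

theorem card_blockOrderings : #(blockOrderings A B) = (#A)! * (#B)! := by
  rw [blockOrderings, Finset.card_image_of_injOn append_injOn_orderings, Finset.card_product,
    card_orderings, card_orderings]

theorem blockOrderings_subset (h : Disjoint A B) : blockOrderings A B ⊆ Orderings (A ∪ B) := by
  intro l hl
  obtain ⟨⟨a, b⟩, hq, rfl⟩ := Finset.mem_image.1 hl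
  obtain ⟨⟨ha, rfl⟩, ⟨hb, rfl⟩⟩ := And.imp mem_orderings.1 mem_orderings.1 (Finset.mem_product.1 hq)
  refine mem_orderings.2 ⟨List.nodup_append.2 ⟨ha, hb, fun x hx y hy => ?_⟩, List.toFinset_append⟩
  exact Finset.disjoint_left.1 h (List.mem_toFinset.2 hx) ∘ (· ▸ List.mem_toFinset.2 hy)

theorem take_mem_orderings_of_mem_blockOrderings (h : l ∈ blockOrderings A B) :
    l.take #A ∈ Orderings A := by
  obtain ⟨⟨a, b⟩, hq, rfl⟩ := Finset.mem_image.1 h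
  obtain ⟨ha, -⟩ := Finset.mem_product.1 hq
  rwa [← length_of_mem_orderings ha, List.take_left]

theorem filter_mem_blockOrderings (p : ℕ → Bool) (h : l ∈ blockOrderings A B) :
    l.filter p ∈ blockOrderings (A.filter (p ·)) (B.filter (p ·)) := by
  obtain ⟨⟨a, b⟩, hq, rfl⟩ := Finset.mem_image.1 h
  obtain ⟨ha, hb⟩ := Finset.mem_product.1 hq
  exact Finset.mem_image.2 ⟨(a.filter p, b.filter p), Finset.mem_product.2
    ⟨filter_mem_orderings_filter p ha, filter_mem_orderings_filter p hb⟩,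
    (List.filter_append ..).symm⟩

theorem card_filter_blockOrderings_mul_factorial (p : ℕ → Bool) {a b : List ℕ}
    (ha : a ∈ Orderings (A.filter (p ·))) (hb : b ∈ Orderings (B.filter (p ·))) :
    #{l ∈ blockOrderings A B | l.filter p = a ++ b} * ((#(A.filter (p ·)))! * (#(B.filter (p ·)))!)
      = (#A)! * (#B)! := by
  have hsplit : {q ∈ Orderings A ×ˢ Orderings B | (q.1 ++ q.2).filter p = a ++ b} =
      {x ∈ Orderings A | x.filter p = a} ×ˢ {y ∈ Orderings B | y.filter p = b} := by
    rw [← Finset.filter_product]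
    refine Finset.filter_congr fun q hq => ?_
    have hlen : (q.1.filter p).length = a.length := by
      rw [length_of_mem_orderings ha,
        length_of_mem_orderings (filter_mem_orderings_filter p (Finset.mem_product.1 hq).1)]
    rw [List.filter_append]
    exact ⟨fun h => List.append_inj h hlen, fun ⟨h₁, h₂⟩ => h₁ ▸ h₂ ▸ rfl⟩
  rw [blockOrderings, Finset.filter_image,
    Finset.card_image_of_injOn (append_injOn_orderings.mono (Finset.filter_subset _ _)), hsplit,
    Finset.card_product, mul_mul_mul_comm, card_filter_orderings_mul_factorial ha,
    card_filter_orderings_mul_factorial hb]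

theorem map_mem_blockOrderings_image_iff {U : Finset ℕ} {f : ℕ → ℕ} (hf : Set.InjOn f U)
    (hA : A ⊆ U) (hB : B ⊆ U) (hl : ∀ x ∈ l, x ∈ U) :
    l.map f ∈ blockOrderings (A.image f) (B.image f) ↔ l ∈ blockOrderings A B := by
  constructor
  · intro h
    obtain ⟨⟨a', b'⟩, hq, hmap⟩ := Finset.mem_image.1 h
    obtain ⟨ha', hb'⟩ : a' ∈ _ ∧ b' ∈ _ := Finset.mem_product.1 hq
    have htake : (l.take a'.length).map f = a' := by rw [List.map_take, ← hmap, List.take_left]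
    have hdrop : (l.drop a'.length).map f = b' := by rw [List.map_drop, ← hmap, List.drop_left]
    refine Finset.mem_image.2 ⟨(l.take a'.length, l.drop a'.length), Finset.mem_product.2
      ⟨?_, ?_⟩, List.take_append_drop _ _⟩
    · exact mem_orderings_of_map_mem_orderings_image hf hA
        (fun x hx => hl x (List.mem_of_mem_take hx)) (by rw [htake]; exact ha')
    · exact mem_orderings_of_map_mem_orderings_image hf hB
        (fun x hx => hl x (List.mem_of_mem_drop hx)) (by rw [hdrop]; exact hb')
  · intro h
    obtain ⟨⟨a, b⟩, hq, rfl⟩ := Finset.mem_image.1 h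
    obtain ⟨ha, hb⟩ := Finset.mem_product.1 hq
    exact Finset.mem_image.2 ⟨(a.map f, b.map f), Finset.mem_product.2
      ⟨map_mem_orderings_image (hf.mono hA) ha, map_mem_orderings_image (hf.mono hB) hb⟩,
      (List.map_append ..).symm⟩

end BlockOrderings

section BlockWeight

noncomputable def blockWeight (A B : Finset ℕ) (l : List ℕ) : ℝ :=
  if l ∈ blockOrderings A B then (((#A)! * (#B)! : ℕ) : ℝ)⁻¹ else 0

variable {A B : Finset ℕ} {l : List ℕ}

theorem blockWeight_nonneg (A B : Finset ℕ) (l : List ℕ) : 0 ≤ blockWeight A B l := by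
  unfold blockWeight
  split_ifs <;> positivity

theorem blockWeight_eq_zero (h : Disjoint A B) (hl : l ∉ Orderings (A ∪ B)) :
    blockWeight A B l = 0 :=
  if_neg fun h' => hl (blockOrderings_subset h h')

theorem sum_blockWeight (h : Disjoint A B) : ∑ l ∈ Orderings (A ∪ B), blockWeight A B l = 1 := by
  simp only [blockWeight]
  rw [Finset.sum_ite_mem, Finset.inter_eq_right.2 (blockOrderings_subset h), Finset.sum_const,
    card_blockOrderings, nsmul_eq_mul, mul_inv_cancel₀ (by positivity)]

theorem sum_filter_blockWeight (h : Disjoint A B) (p : ℕ → Bool) (m : List ℕ) :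
    ∑ l ∈ Orderings (A ∪ B) with l.filter p = m, blockWeight A B l =
      blockWeight (A.filter (p ·)) (B.filter (p ·)) m := by
  simp only [blockWeight]
  rw [Finset.sum_ite_mem, Finset.sum_const, nsmul_eq_mul, Finset.filter_inter,
    Finset.inter_eq_right.2 (blockOrderings_subset h)]
  split_ifs with hm
  · obtain ⟨⟨a, b⟩, hq, rfl⟩ := Finset.mem_image.1 hm
    obtain ⟨ha, hb⟩ := Finset.mem_product.1 hq
    have hcard := card_filter_blockOrderings_mul_factorial p ha hb
    field_simp
    exact_mod_cast hcard
  · rw [Finset.filter_eq_empty_iff.2 fun l hl (hlm : l.filter p = m) =>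
      hm (hlm ▸ filter_mem_blockOrderings p hl)]
    simp

theorem blockWeight_map {U : Finset ℕ} {f : ℕ → ℕ} (hf : Set.InjOn f U) (hA : A ⊆ U)
    (hB : B ⊆ U) (hl : ∀ x ∈ l, x ∈ U) :
    blockWeight (A.image f) (B.image f) (l.map f) = blockWeight A B l := by
  simp only [blockWeight, map_mem_blockOrderings_image_iff hf hA hB hl,
    Finset.card_image_of_injOn (hf.mono hA), Finset.card_image_of_injOn (hf.mono hB)]

end BlockWeight

namespace FinHypergraph

variable {G G' H : FinHypergraph 2}

theorem Connected.iff_of_forall_adj (hG : G.Connected) {P : ℕ → Prop}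
    (hP : ∀ x y, G.Adj x y → (P x ↔ P y)) {x y : ℕ} (hx : x ∈ G.verts) (hy : y ∈ G.verts) :
    P x ↔ P y := by
  by_cases hxy : x = y
  · rw [hxy]
  · obtain ⟨p, hp, rfl⟩ := hG x hx y hy hxy
    exact List.IsChain.iff_getLast hP hp

theorem Adj.ne {x y : ℕ} (h : G.Adj x y) : x ≠ y := by
  rintro rfl
  simpa using G.card_edge _ h

def IsBipartition (G : FinHypergraph 2) (A B : Finset ℕ) : Prop :=
  A ∪ B = G.verts ∧ Disjoint A B ∧ ∀ e ∈ G.edges, ∃ a ∈ A, ∃ b ∈ B, e = ({a, b} : Finset ℕ)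

variable {A B A' B' : Finset ℕ}

namespace IsBipartition

theorem symm (h : G.IsBipartition A B) : G.IsBipartition B A := by
  refine ⟨Finset.union_comm B A ▸ h.1, h.2.1.symm, fun e he => ?_⟩
  obtain ⟨a, ha, b, hb, rfl⟩ := h.2.2 e he
  exact ⟨b, hb, a, ha, Finset.pair_comm a b⟩

theorem mem_right_iff (h : G.IsBipartition A B) {v : ℕ} (hv : v ∈ G.verts) : v ∈ B ↔ v ∉ A := by
  rw [← h.1, Finset.mem_union] at hv
  have : v ∈ A → v ∉ B := fun hA => Finset.disjoint_left.1 h.2.1 hA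
  tauto

theorem mem_iff_notMem_of_adj (h : G.IsBipartition A B) {x y : ℕ} (hxy : G.Adj x y) :
    x ∈ A ↔ y ∉ A := by
  obtain ⟨a, ha, b, hb, hab⟩ := h.2.2 _ hxy
  have hbA : b ∉ A := Finset.disjoint_right.1 h.2.1 hb
  have hne := hxy.ne
  have hx : x ∈ ({a, b} : Finset ℕ) := hab ▸ by simp
  have hy : y ∈ ({a, b} : Finset ℕ) := hab ▸ by simp
  simp only [Finset.mem_insert, Finset.mem_singleton] at hx hy
  rcases hx with rfl | rfl <;> rcases hy with rfl | rfl <;> simp_all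

theorem eq_of_forall_mem_iff (h : G.IsBipartition A B) (h' : G.IsBipartition A' B')
    (hA : ∀ v ∈ G.verts, v ∈ A ↔ v ∈ A') : A = A' ∧ B = B' := by
  have hAA' : A = A' := by
    ext v
    constructor
    · exact fun hv => (hA v (h.1 ▸ Finset.mem_union_left B hv)).1 hv
    · exact fun hv => (hA v (h'.1 ▸ Finset.mem_union_left B' hv)).2 hv
  refine ⟨hAA', ?_⟩
  rw [← Finset.union_sdiff_cancel_left h.2.1, ← Finset.union_sdiff_cancel_left h'.2.1, h.1, h'.1,
    hAA']

theorem eq_or_eq_swap (hG : G.Connected) (h : G.IsBipartition A B)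
    (h' : G.IsBipartition A' B') : (A = A' ∧ B = B') ∨ (A = B' ∧ B = A') := by
  have hconst : ∀ v ∈ G.verts, ∀ w ∈ G.verts, ((v ∈ A ↔ v ∈ A') ↔ (w ∈ A ↔ w ∈ A')) :=
    fun v hv w hw => hG.iff_of_forall_adj (P := fun v => v ∈ A ↔ v ∈ A') (fun x y hxy => by
      simp only [h.mem_iff_notMem_of_adj hxy, h'.mem_iff_notMem_of_adj hxy]; tauto) hv hw
  by_cases hagree : ∀ v ∈ G.verts, v ∈ A ↔ v ∈ A'
  · exact Or.inl (h.eq_of_forall_mem_iff h' hagree)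
  · push Not at hagree
    obtain ⟨v₀, hv₀, hne⟩ := hagree
    refine Or.inr (h.eq_of_forall_mem_iff h'.symm fun v hv => ?_)
    rw [h'.mem_right_iff hv]
    have := hconst v hv v₀ hv₀
    tauto

theorem induce (h : G.IsBipartition A B) (hH : H.IsInduced G) :
    H.IsBipartition (A ∩ H.verts) (B ∩ H.verts) := by
  refine ⟨?_, h.2.1.mono Finset.inter_subset_left Finset.inter_subset_left, fun e he => ?_⟩
  · rw [← Finset.union_inter_distrib_right, h.1, Finset.inter_eq_right.2 hH.1]
  · have heH := H.edge_subset e he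
    obtain ⟨a, ha, b, hb, rfl⟩ := h.2.2 e ((hH.2 e heH).1 he)
    exact ⟨a, Finset.mem_inter.2 ⟨ha, heH (by simp)⟩, b, Finset.mem_inter.2 ⟨hb, heH (by simp)⟩,
      rfl⟩

theorem image (h : G.IsBipartition A B) {f : ℕ → ℕ} (hf : G.IsIso G' f) :
    G'.IsBipartition (A.image f) (B.image f) := by
  obtain ⟨hinj, hverts, hedges⟩ := hf
  refine ⟨by rw [← Finset.image_union, h.1, hverts], ?_, fun e' he' => ?_⟩
  · rw [Finset.disjoint_left]
    intro _ hxA hxB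
    obtain ⟨a, ha, rfl⟩ := Finset.mem_image.1 hxA
    obtain ⟨b, hb, hba⟩ := Finset.mem_image.1 hxB
    have hab : b = a :=
      hinj (h.1 ▸ Finset.mem_union_right A hb) (h.1 ▸ Finset.mem_union_left B ha) hba
    exact Finset.disjoint_left.1 h.2.1 ha (hab ▸ hb)
  · obtain ⟨e, heV, rfl⟩ := Finset.subset_image_iff.1 (hverts ▸ G'.edge_subset e' he')
    obtain ⟨a, ha, b, hb, rfl⟩ := h.2.2 e ((hedges e heV).2 he')
    exact ⟨f a, Finset.mem_image_of_mem f ha, f b, Finset.mem_image_of_mem f hb, by simp⟩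

end IsBipartition

noncomputable def bipartition (G : FinHypergraph 2) : Finset ℕ × Finset ℕ :=
  Classical.epsilon fun p => G.IsBipartition p.1 p.2

theorem Bipartite.isBipartition (h : G.Bipartite) :
    G.IsBipartition G.bipartition.1 G.bipartition.2 :=
  let ⟨A, B, hAB⟩ := h
  Classical.epsilon_spec (p := fun p : Finset ℕ × Finset ℕ => G.IsBipartition p.1 p.2)
    ⟨(A, B), hAB⟩

end FinHypergraph

section BipartiteOrdering

open FinHypergraph

noncomputable def bipartiteWeight (G : FinHypergraph 2) (l : List ℕ) : ℝ :=
  (blockWeight G.bipartition.1 G.bipartition.2 l +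
    blockWeight G.bipartition.2 G.bipartition.1 l) / 2

variable {G G' H : FinHypergraph 2} {A B : Finset ℕ} {l : List ℕ}

theorem bipartiteWeight_eq (hG : G.Connected) (h : G.IsBipartition A B) (l : List ℕ) :
    bipartiteWeight G l = (blockWeight A B l + blockWeight B A l) / 2 := by
  rcases (Bipartite.isBipartition ⟨A, B, h⟩).eq_or_eq_swap hG h with ⟨hA, hB⟩ | ⟨hA, hB⟩ <;>
    rw [bipartiteWeight, hA, hB]
  rw [add_comm]

theorem bipartiteWeight_nonneg (G : FinHypergraph 2) (l : List ℕ) : 0 ≤ bipartiteWeight G l :=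
  div_nonneg (add_nonneg (blockWeight_nonneg _ _ l) (blockWeight_nonneg _ _ l)) zero_le_two

theorem bipartiteWeight_eq_zero (hb : G.Bipartite) (hl : l ∉ Orderings G.verts) :
    bipartiteWeight G l = 0 := by
  have h := hb.isBipartition
  rw [bipartiteWeight, blockWeight_eq_zero h.2.1 (h.1 ▸ hl),
    blockWeight_eq_zero h.2.1.symm (h.symm.1 ▸ hl), add_zero, zero_div]

theorem sum_bipartiteWeight (hb : G.Bipartite) :
    ∑ l ∈ Orderings G.verts, bipartiteWeight G l = 1 := by
  have h := hb.isBipartition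
  simp only [bipartiteWeight]
  rw [← Finset.sum_div, Finset.sum_add_distrib, ← h.1, sum_blockWeight h.2.1, Finset.union_comm,
    sum_blockWeight h.2.1.symm]
  norm_num

theorem bipartiteWeight_map (hG' : G'.Connected) (hb : G.Bipartite) {f : ℕ → ℕ}
    (hf : G.IsIso G' f) (hl : l ∈ Orderings G.verts) :
    bipartiteWeight G' (l.map f) = bipartiteWeight G l := by
  have h := hb.isBipartition
  have h' := h.image hf
  have hlV : ∀ x ∈ l, x ∈ G.verts := fun x hx => (mem_orderings.1 hl).2 ▸ List.mem_toFinset.2 hx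
  have hAV := h.1 ▸ Finset.subset_union_left
  have hBV := h.1 ▸ Finset.subset_union_right
  rw [bipartiteWeight_eq hG' h', blockWeight_map hf.1 hAV hBV hlV,
    blockWeight_map hf.1 hBV hAV hlV, bipartiteWeight]

theorem bipartiteWeight_eq_sum_filter (hH : H.Connected) (hb : G.Bipartite) (hHG : H.IsInduced G)
    (m : List ℕ) :
    bipartiteWeight H m =
      ∑ l ∈ Orderings G.verts with l.filter (fun x => decide (x ∈ H.verts)) = m,
        bipartiteWeight G l := by
  have h := hb.isBipartition
  have hH' := h.induce hHG
  have hfilter (X : Finset ℕ) : X.filter (fun x => decide (x ∈ H.verts) = true) = X ∩ H.verts := by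
    simp only [decide_eq_true_eq, Finset.filter_mem_eq_inter]
  simp only [bipartiteWeight]
  rw [← Finset.sum_div, Finset.sum_add_distrib, ← h.1, sum_filter_blockWeight h.2.1,
    Finset.union_comm, sum_filter_blockWeight h.2.1.symm, hfilter, hfilter]
  exact bipartiteWeight_eq hH hH' m

noncomputable def bipartiteRandomOrdering :
    ConsistentRandomOrdering {G : FinHypergraph 2 | G.Connected ∧ G.Bipartite} where
  μ := bipartiteWeight
  nonneg := bipartiteWeight_nonneg
  supported _ hG _ hl := bipartiteWeight_eq_zero hG.2 hl
  total _ hG := sum_bipartiteWeight hG.2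
  iso_invariant _ hG _ hG' _ hf _ hl := bipartiteWeight_map hG'.1 hG.2 hf hl
  restriction _ hG _ hH hHG m _ := bipartiteWeight_eq_sum_filter hH.1 hG.2 hHG m

end BipartiteOrdering

def pathGraph3 : FinHypergraph 2 :=
  ⟨{0, 1, 2}, {{0, 1}, {1, 2}}, by decide, by decide⟩

theorem pathGraph3_isBipartition : pathGraph3.IsBipartition {0, 2} {1} :=
  ⟨by decide, by decide, by decide⟩

theorem pathGraph3_connected : pathGraph3.Connected := by
  intro x hx y hy hxy
  simp only [pathGraph3, Finset.mem_insert, Finset.mem_singleton] at hx hy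
  rcases hx with rfl | rfl | rfl <;> rcases hy with rfl | rfl | rfl <;> first
    | exact absurd rfl hxy
    | refine ⟨[_], (?_ : List.IsChain _ _), rfl⟩
      simp [FinHypergraph.Adj, pathGraph3] <;> decide
    | refine ⟨[1, _], (?_ : List.IsChain _ _), rfl⟩
      simp [FinHypergraph.Adj, pathGraph3] <;> decide

theorem bipartiteWeight_pathGraph3 : bipartiteWeight pathGraph3 [0, 1, 2] = 0 := by
  have hAB : [0, 1, 2] ∉ blockOrderings {0, 2} {1} := fun h =>
    absurd (mem_orderings.1 (take_mem_orderings_of_mem_blockOrderings h)).2 (by decide)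
  have hBA : [0, 1, 2] ∉ blockOrderings {1} {0, 2} := fun h =>
    absurd (mem_orderings.1 (take_mem_orderings_of_mem_blockOrderings h)).2 (by decide)
  rw [bipartiteWeight_eq pathGraph3_connected pathGraph3_isBipartition, blockWeight, blockWeight,
    if_neg hAB, if_neg hBA]
  norm_num

/-- There is a non-uniform consistent random ordering on the class of all finite
connected bipartite simple graphs. -/
theorem uniqueErgodicity.stmt7 :
    ∃ cro : ConsistentRandomOrdering {G : FinHypergraph 2 | G.Connected ∧ G.Bipartite},
      ∃ G ∈ {G : FinHypergraph 2 | G.Connected ∧ G.Bipartite},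
        ∃ l ∈ Orderings G.verts, cro.μ G l ≠ ((G.verts.card).factorial : ℝ)⁻¹ := by
  refine ⟨bipartiteRandomOrdering, pathGraph3,
    ⟨pathGraph3_connected, _, _, pathGraph3_isBipartition⟩, [0, 1, 2], mem_orderings.2 ⟨by decide, by decide⟩, ?_⟩
  change bipartiteWeight pathGraph3 [0, 1, 2] ≠ _
  rw [bipartiteWeight_pathGraph3]
  positivity
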